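/- arXiv:2109.08481 — 3 statements merged into one kernel-verified Lean document; each statement's English description precedes it below -/
import Mathlib

section
/- The numerical range of the n×n Jordan block with eigenvalue 0 is the closed disk centered at the origin of radius cos(π/(n+1)). -/
/-- The numerical range of a matrix `A : Matrix (Fin n) (Fin n) ℂ`. -/
noncomputable def numericalRange (n : ℕ) (A : Matrix (Fin n) (Fin n) ℂ) : Set ℂ :=
  { w : ℂ | ∃ x : EuclideanSpace ℂ (Fin n), ‖x‖ = 1 ∧
      inner ℂ (Matrix.toEuclideanLin A x) x = w }

/-- The `n × n` nilpotent Jordan block: ones on the superdiagonal, zeros elsewhere. -/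
def jordanBlock (n : ℕ) : Matrix (Fin n) (Fin n) ℂ :=
  Matrix.of fun i j => if (i : ℕ) + 1 = (j : ℕ) then 1 else 0

/-!
Write `θ = π / (n + 1)` and `s k = sin (k θ)`. Then `s 0 = s (n + 1) = 0`, `s` is positive on
`1, …, n` and `s k + s (k + 2) = 2 cos θ · s (k + 1)`: it is a positive eigenvector of the real
part `(J + Jᴴ) / 2`. Since `⟪J x, x⟫ = ∑ conj (x (i + 1)) * x i`, the bound
`|⟪J x, x⟫| ≤ cos θ` reduces to `∑ a i * a (i + 1) ≤ cos θ ∑ a i ^ 2` for `a i = |x i|`,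
which is the sum of the weighted AM-GM inequalities with weights `s (i + 2) / s (i + 1)`.
Equality holds at `a = s`; intermediate radii come from the intermediate value theorem on the
segment from the first basis vector to `s`, and multiplying `x k` by `conj u ^ k` rotates
`⟪J x, x⟫` by the unit `u`.
-/

open Real Finset ComplexConjugate

theorem sum_range_succ_eq_sum_range_of_eq_zero {M : Type*} [AddCommMonoid M] (f : ℕ → M)
    {n : ℕ} (h0 : f 0 = 0) (hn : f n = 0) :
    ∑ i ∈ range n, f (i + 1) = ∑ i ∈ range n, f i := by
  have h := sum_range_succ' f n
  rw [sum_range_succ, hn, add_zero, h0, add_zero] at h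
  exact h.symm

theorem mul_le_div_mul_sq_add_div_mul_sq {K : Type*} [Field K] [LinearOrder K]
    [IsStrictOrderedRing K] {p q : K} (hp : 0 < p) (hq : 0 < q) (x y : K) :
    x * y ≤ q / (2 * p) * x ^ 2 + p / (2 * q) * y ^ 2 := by
  have key : q / (2 * p) * x ^ 2 + p / (2 * q) * y ^ 2 - x * y
      = (q * x - p * y) ^ 2 / (2 * p * q) := by
    field_simp
    ring
  have : 0 ≤ (q * x - p * y) ^ 2 / (2 * p * q) := by positivity
  linarith

/-- A positive eigenvector, for the eigenvalue `c`, of half the adjacency matrix of the path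
`1, …, n`, extended by zero. -/
structure IsPathEigenvector (n : ℕ) (c : ℝ) (s : ℕ → ℝ) : Prop where
  zero : s 0 = 0
  pos : ∀ k, 1 ≤ k → k ≤ n → 0 < s k
  boundary : s (n + 1) = 0
  recurrence : ∀ k < n, s k + s (k + 2) = 2 * c * s (k + 1)

namespace IsPathEigenvector

variable {n : ℕ} {c : ℝ} {s : ℕ → ℝ}

theorem sum_mul_succ_eq (hs : IsPathEigenvector n c s) :
    ∑ i ∈ range n, s (i + 1) * s (i + 2) = c * ∑ i ∈ range n, s (i + 1) ^ 2 := by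
  have hshift : ∑ i ∈ range n, s (i + 1) * s i = ∑ i ∈ range n, s (i + 2) * s (i + 1) :=
    (sum_range_succ_eq_sum_range_of_eq_zero (fun i => s (i + 1) * s i)
      (by simp [hs.zero]) (by simp [hs.boundary])).symm
  have hrec : ∑ i ∈ range n, s (i + 1) * (s i + s (i + 2))
      = 2 * c * ∑ i ∈ range n, s (i + 1) ^ 2 := by
    rw [mul_sum]
    refine sum_congr rfl fun i hi => ?_
    rw [hs.recurrence i (mem_range.mp hi)]
    ring
  simp only [mul_add, sum_add_distrib, hshift, mul_comm (s (_ + 2))] at hrec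
  linarith

theorem sum_mul_succ_le (hs : IsPathEigenvector n c s) {a : ℕ → ℝ} (ha : a n = 0) :
    ∑ i ∈ range n, a i * a (i + 1) ≤ c * ∑ i ∈ range n, a i ^ 2 := by
  have hterm : ∀ i ∈ range n, a i * a (i + 1)
      ≤ s (i + 2) / (2 * s (i + 1)) * a i ^ 2 + s (i + 1) / (2 * s (i + 2)) * a (i + 1) ^ 2 := by
    intro i hi
    have hi := mem_range.mp hi
    rcases Nat.lt_or_ge (i + 1) n with hlt | hge
    · exact mul_le_div_mul_sq_add_div_mul_sq (hs.pos _ (by omega) (by omega))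
        (hs.pos _ (by omega) (by omega)) _ _
    · obtain rfl : i + 1 = n := by omega
      simp [ha, hs.boundary]
  have hshift : ∑ i ∈ range n, s (i + 1) / (2 * s (i + 2)) * a (i + 1) ^ 2
      = ∑ i ∈ range n, s i / (2 * s (i + 1)) * a i ^ 2 :=
    sum_range_succ_eq_sum_range_of_eq_zero (fun i => s i / (2 * s (i + 1)) * a i ^ 2)
      (by simp [hs.zero]) (by simp [ha])
  have hweights : ∀ i ∈ range n,
      s (i + 2) / (2 * s (i + 1)) * a i ^ 2 + s i / (2 * s (i + 1)) * a i ^ 2 = c * a i ^ 2 := by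
    intro i hi
    have hpos := hs.pos (i + 1) (by omega) (mem_range.mp hi)
    have hrec := hs.recurrence i (mem_range.mp hi)
    field_simp
    linear_combination a i ^ 2 * hrec
  calc ∑ i ∈ range n, a i * a (i + 1)
      ≤ ∑ i ∈ range n, (s (i + 2) / (2 * s (i + 1)) * a i ^ 2
          + s (i + 1) / (2 * s (i + 2)) * a (i + 1) ^ 2) := sum_le_sum hterm
    _ = c * ∑ i ∈ range n, a i ^ 2 := by
      rw [sum_add_distrib, hshift, ← sum_add_distrib, mul_sum]
      exact sum_congr rfl hweights

theorem exists_sum_mul_succ_eq (hs : IsPathEigenvector n c s) (hn : 0 < n) {ρ : ℝ}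
    (hρ0 : 0 ≤ ρ) (hρc : ρ ≤ c) :
    ∃ b : ℕ → ℝ, b n = 0 ∧ 0 < ∑ i ∈ range n, b i ^ 2 ∧
      ∑ i ∈ range n, b i * b (i + 1) = ρ * ∑ i ∈ range n, b i ^ 2 := by
  let e : ℕ → ℝ := fun i => if i = 0 then 1 else 0
  let b : ℝ → ℕ → ℝ := fun t i => (1 - t) * e i + t * s (i + 1)
  let f : ℝ → ℝ := fun t =>
    ∑ i ∈ range n, b t i * b t (i + 1) - ρ * ∑ i ∈ range n, b t i ^ 2
  have hf : Continuous f := by fun_prop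
  have hf0 : f 0 ≤ 0 := by
    simp [f, b, e, sum_ite_eq', hn, hρ0]
  have hf1 : 0 ≤ f 1 := by
    have := hs.sum_mul_succ_eq
    simp only [f, b, sub_self, zero_mul, one_mul, zero_add, this, ← sub_mul]
    exact mul_nonneg (sub_nonneg.mpr hρc) (sum_nonneg fun i _ => sq_nonneg _)
  obtain ⟨t, ⟨ht0, ht1⟩, hft⟩ :=
    intermediate_value_Icc zero_le_one hf.continuousOn ⟨hf0, hf1⟩
  refine ⟨b t, by simp [b, e, hn.ne', hs.boundary], ?_, by linarith [show f t = 0 from hft]⟩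
  have hb0 : 0 < b t 0 := by
    have := hs.pos 1 le_rfl hn
    simp only [b, e, if_pos]
    rcases ht1.lt_or_eq with h | rfl
    · nlinarith
    · simpa
  calc 0 < b t 0 ^ 2 := by positivity
    _ ≤ ∑ i ∈ range n, b t i ^ 2 :=
      single_le_sum (f := fun i => b t i ^ 2) (fun i _ => sq_nonneg _) (mem_range.mpr hn)

end IsPathEigenvector

theorem isPathEigenvector_sin (n : ℕ) :
    IsPathEigenvector n (cos (π / (n + 1))) fun k => sin (k * (π / (n + 1))) where
  zero := by simp
  pos k hk1 hkn := by
    apply sin_pos_of_pos_of_lt_pi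
    · have : (1 : ℝ) ≤ k := by exact_mod_cast hk1
      positivity
    · rw [← lt_div_iff₀ (by positivity), div_div_cancel₀ pi_pos.ne']
      exact_mod_cast Nat.lt_succ_of_le hkn
  boundary := by
    push_cast
    rw [mul_div_cancel₀ _ (by positivity), sin_pi]
  recurrence k _ := by
    rw [mul_right_comm, two_mul_sin_mul_cos]
    push_cast
    ring_nf

section JordanBlock

variable {n : ℕ}

theorem inner_div_norm_sq_mem_numericalRange (A : Matrix (Fin n) (Fin n) ℂ)
    {x : EuclideanSpace ℂ (Fin n)} (hx : x ≠ 0) :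
    inner ℂ (Matrix.toEuclideanLin A x) x / (‖x‖ ^ 2 : ℂ) ∈ numericalRange n A := by
  refine ⟨(‖x‖⁻¹ : ℂ) • x, ?_, ?_⟩
  · rw [norm_smul, norm_inv, Complex.norm_real, norm_norm,
      inv_mul_cancel₀ (norm_ne_zero_iff.mpr hx)]
  · rw [map_smul, inner_smul_left, inner_smul_right, map_inv₀, Complex.conj_ofReal]
    field_simp

def extendByZero (x : EuclideanSpace ℂ (Fin n)) (k : ℕ) : ℂ :=
  if h : k < n then x ⟨k, h⟩ else 0

theorem sum_range_norm_extendByZero_sq (x : EuclideanSpace ℂ (Fin n)) :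
    ∑ i ∈ range n, ‖extendByZero x i‖ ^ 2 = ‖x‖ ^ 2 := by
  rw [EuclideanSpace.norm_sq_eq, ← Fin.sum_univ_eq_sum_range]
  simp [extendByZero]

theorem jordanBlock_mulVec_apply (v : Fin n → ℂ) (i : Fin n) :
    (jordanBlock n).mulVec v i = if h : (i : ℕ) + 1 < n then v ⟨i + 1, h⟩ else 0 := by
  simp only [jordanBlock, Matrix.mulVec, dotProduct, Matrix.of_apply, ite_mul, one_mul, zero_mul]
  split_ifs with h
  · rw [sum_eq_single_of_mem ⟨i + 1, h⟩ (mem_univ _)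
      fun j _ hj => if_neg fun hij => hj (Fin.ext hij.symm)]
    simp
  · exact sum_eq_zero fun j _ => if_neg fun (hij : (i : ℕ) + 1 = j) => h (hij ▸ j.isLt)

theorem inner_jordanBlock (x : EuclideanSpace ℂ (Fin n)) :
    inner ℂ (Matrix.toEuclideanLin (jordanBlock n) x) x
      = ∑ i ∈ range n, conj (extendByZero x (i + 1)) * extendByZero x i := by
  rw [Matrix.toLpLin_apply, PiLp.inner_apply, ← Fin.sum_univ_eq_sum_range]
  refine Fintype.sum_congr _ _ fun i => ?_
  simp [jordanBlock_mulVec_apply, extendByZero, mul_comm]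

theorem norm_inner_jordanBlock_le (x : EuclideanSpace ℂ (Fin n)) :
    ‖inner ℂ (Matrix.toEuclideanLin (jordanBlock n) x) x‖ ≤
      cos (π / (n + 1)) * ‖x‖ ^ 2 := by
  rw [inner_jordanBlock, ← sum_range_norm_extendByZero_sq]
  calc _ ≤ ∑ i ∈ range n, ‖extendByZero x i‖ * ‖extendByZero x (i + 1)‖ := by
        refine (norm_sum_le _ _).trans (sum_le_sum fun i _ => ?_)
        rw [norm_mul, RCLike.norm_conj, mul_comm]
    _ ≤ _ := (isPathEigenvector_sin n).sum_mul_succ_le (a := fun i => ‖extendByZero x i‖)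
        (by simp [extendByZero])

theorem mul_mem_numericalRange_jordanBlock {b : ℕ → ℝ} (hbn : b n = 0)
    (hb : 0 < ∑ i ∈ range n, b i ^ 2) {u : ℂ} (hu : ‖u‖ = 1) :
    (((∑ i ∈ range n, b i * b (i + 1)) / ∑ i ∈ range n, b i ^ 2 : ℝ) : ℂ) * u ∈
      numericalRange n (jordanBlock n) := by
  set x : EuclideanSpace ℂ (Fin n) := WithLp.toLp 2 fun i => b i * conj u ^ (i : ℕ)
  have hx : ∀ k ≤ n, extendByZero x k = b k * conj u ^ k := by
    intro k hk
    rcases hk.lt_or_eq with hk | rfl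
    · simp [extendByZero, hk, x]
    · simp [extendByZero, hbn]
  have hnorm : ‖x‖ ^ 2 = ∑ i ∈ range n, b i ^ 2 := by
    rw [← sum_range_norm_extendByZero_sq]
    refine sum_congr rfl fun i hi => ?_
    simp [hx i (mem_range.mp hi).le, hu]
  have hu_conj : u * conj u = 1 := by
    rw [Complex.mul_conj, Complex.normSq_eq_norm_sq, hu]
    norm_num
  have hinner : inner ℂ (Matrix.toEuclideanLin (jordanBlock n) x) x
      = (∑ i ∈ range n, b i * b (i + 1) : ℝ) * u := by
    rw [inner_jordanBlock, Complex.ofReal_sum, sum_mul]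
    refine sum_congr rfl fun i hi => ?_
    have hpow : u ^ (i + 1) * conj u ^ i = u := by
      rw [pow_succ', mul_assoc, ← mul_pow, hu_conj, one_pow, mul_one]
    rw [hx i (mem_range.mp hi).le, hx (i + 1) (mem_range.mp hi)]
    simp only [map_mul, map_pow, Complex.conj_conj, Complex.conj_ofReal, Complex.ofReal_mul]
    linear_combination (b i * b (i + 1) : ℂ) * hpow
  have hx0 : x ≠ 0 := by
    rintro hx0
    rw [hx0, norm_zero] at hnorm
    linarith
  convert inner_div_norm_sq_mem_numericalRange (jordanBlock n) hx0 using 1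
  rw [hinner, ← Complex.ofReal_pow, hnorm, Complex.ofReal_div, div_mul_eq_mul_div]

end JordanBlock

/-- The numerical range of the `n × n` Jordan block with eigenvalue `0` is the closed
disk centered at the origin of radius `cos (π / (n + 1))`. -/
theorem numericalRange_jordanBlock (n : ℕ) (hn : 0 < n) :
    numericalRange n (jordanBlock n) =
      Metric.closedBall (0 : ℂ) (Real.cos (Real.pi / (n + 1))) := by
  ext w
  rw [Metric.mem_closedBall, dist_zero_right]
  constructor
  · rintro ⟨x, hx, rfl⟩
    simpa [hx] using norm_inner_jordanBlock_le x
  · intro hw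
    obtain ⟨b, hbn, hb, hsum⟩ :=
      (isPathEigenvector_sin n).exists_sum_mul_succ_eq hn (norm_nonneg w) hw
    have hw' := mul_mem_numericalRange_jordanBlock hbn hb (Complex.norm_exp_ofReal_mul_I w.arg)
    rwa [hsum, mul_div_cancel_right₀ _ hb.ne', Complex.norm_mul_exp_arg_mul_I] at hw'
end

section
/- Let B be a finite Blaschke product of degree n ≥ 1. Then for every w on the unit circle, the equation B(z) = w has exactly n distinct solutions z on the unit circle. -/
/-!
Clearing denominators, `B z = w` becomes `P z = 0` for `P = γ A - w D` with
`A = ∏ (X - λₖ)` and `D = ∏ (1 - conj λₖ X)`. The coefficient of `Xⁿ` in `P` is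
`γ - w ∏ (-conj λₖ)`, of modulus at least `1 - ∏ |λₖ| > 0`, so `P` has degree `n`.
Since `|1 - conj λ z|² - |z - λ|² = (1 - |λ|²)(1 - |z|²)`, comparing `|γ A(z)| = |w D(z)|`
factor by factor puts every root of `P` on the unit circle, where the roots are exactly the
solutions of `B z = w`. The roots are simple: at a root `z`, `P'(z) = γ A(z) (A'/A - D'/D)(z)`,
and `z (A'/A - D'/D)(z) = ∑ (1 - |λₖ|²) / |z - λₖ|² > 0`.
-/

open Finset Polynomial ComplexConjugate

theorem Finset.prod_lt_prod_of_nonempty_of_nonneg {ι R : Type*} [CommSemiring R] [LinearOrder R]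
    [IsStrictOrderedRing R] {s : Finset ι} {f g : ι → R} (hs : s.Nonempty)
    (hf : ∀ i ∈ s, 0 ≤ f i) (hfg : ∀ i ∈ s, f i < g i) :
    ∏ i ∈ s, f i < ∏ i ∈ s, g i := by
  by_cases hzero : ∃ i ∈ s, f i = 0
  · obtain ⟨i, hi, hfi⟩ := hzero
    rw [prod_eq_zero hi hfi]
    exact prod_pos fun i hi => (hf i hi).trans_lt (hfg i hi)
  · push Not at hzero
    exact prod_lt_prod_of_nonempty (fun i hi => (hf i hi).lt_of_ne' (hzero i hi)) hfg hs

theorem Polynomial.nodup_roots_of_eval_derivative_ne_zero {R : Type*} [CommRing R] [IsDomain R]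
    {p : R[X]} (h : ∀ z, p.IsRoot z → p.derivative.eval z ≠ 0) : p.roots.Nodup := by
  classical
  rcases eq_or_ne p 0 with rfl | hp
  · simp
  rw [Multiset.nodup_iff_count_le_one]
  intro z
  rw [count_roots, ← not_lt, one_lt_rootMultiplicity_iff_isRoot hp]
  exact fun ⟨hroot, hroot'⟩ => h z hroot hroot'

theorem deriv_sub_eq_mul_logDeriv_sub {𝕜 𝕜' : Type*} [NontriviallyNormedField 𝕜]
    [NontriviallyNormedField 𝕜'] [NormedAlgebra 𝕜 𝕜'] {f g : 𝕜 → 𝕜'} {x : 𝕜}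
    (hf : DifferentiableAt 𝕜 f x) (hg : DifferentiableAt 𝕜 g x) (hfg : f x = g x)
    (hx : f x ≠ 0) :
    deriv (fun y => f y - g y) x = f x * (logDeriv f x - logDeriv g x) := by
  rw [deriv_fun_sub hf hg, logDeriv_apply, logDeriv_apply, mul_sub, mul_div_cancel₀ _ hx, hfg,
    mul_div_cancel₀ _ (hfg ▸ hx)]

namespace Complex

theorem norm_one_sub_conj_mul_sq_sub_norm_sub_sq (a z : ℂ) :
    ‖1 - conj a * z‖ ^ 2 - ‖z - a‖ ^ 2 = (1 - ‖a‖ ^ 2) * (1 - ‖z‖ ^ 2) := by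
  simp only [← normSq_eq_norm_sq, normSq_apply, sub_re, sub_im, mul_re, mul_im, one_re, one_im,
    conj_re, conj_im]
  ring

variable {a z : ℂ}

theorem norm_sub_lt_norm_one_sub_conj_mul (ha : ‖a‖ < 1) (hz : ‖z‖ < 1) :
    ‖z - a‖ < ‖1 - conj a * z‖ := by
  have hpos : 0 < (1 - ‖a‖ ^ 2) * (1 - ‖z‖ ^ 2) := by
    have := norm_nonneg a
    have := norm_nonneg z
    exact mul_pos (by nlinarith) (by nlinarith)
  rw [← sq_lt_sq₀ (norm_nonneg _) (norm_nonneg _)]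
  linarith [norm_one_sub_conj_mul_sq_sub_norm_sub_sq a z]

theorem norm_one_sub_conj_mul_lt_norm_sub (ha : ‖a‖ < 1) (hz : 1 < ‖z‖) :
    ‖1 - conj a * z‖ < ‖z - a‖ := by
  have hneg : (1 - ‖a‖ ^ 2) * (1 - ‖z‖ ^ 2) < 0 := by
    have := norm_nonneg a
    exact mul_neg_of_pos_of_neg (by nlinarith) (by nlinarith)
  rw [← sq_lt_sq₀ (norm_nonneg _) (norm_nonneg _)]
  linarith [norm_one_sub_conj_mul_sq_sub_norm_sub_sq a z]

theorem one_sub_conj_mul_ne_zero (ha : ‖a‖ < 1) (hz : ‖z‖ ≤ 1) : 1 - conj a * z ≠ 0 := by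
  intro h
  have hlt : ‖conj a * z‖ < 1 := by
    rw [norm_mul, norm_conj]
    nlinarith [norm_nonneg a, norm_nonneg z]
  rw [← sub_eq_zero.1 h, norm_one] at hlt
  exact lt_irrefl _ hlt

/-- `z` times the logarithmic derivative of the Blaschke factor `(z - a) / (1 - conj a * z)`
is the Poisson kernel on the unit circle. -/
theorem mul_inv_sub_add_conj_div_one_sub_conj_mul (hz : ‖z‖ = 1) (hza : z ≠ a) :
    z * ((z - a)⁻¹ + conj a / (1 - conj a * z)) = ((1 - ‖a‖ ^ 2) / ‖z - a‖ ^ 2 : ℝ) := by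
  have hzz : z * conj z = 1 := by rw [mul_conj, normSq_eq_norm_sq, hz]; norm_num
  have hden : 1 - conj a * z = z * conj (z - a) := by
    rw [map_sub, mul_sub, hzz]; ring
  have hz0 : z ≠ 0 := by rintro rfl; simp at hz
  have hconj : conj (z - a) ≠ 0 := (_root_.map_ne_zero _).2 (sub_ne_zero.2 hza)
  push_cast
  rw [hden, ← mul_conj', ← mul_conj']
  field_simp
  rw [map_sub]
  linear_combination hzz

end Complex

section BlaschkeLevelPoly

variable {ι : Type*} [Fintype ι] (γ w : ℂ) (lam : ι → ℂ)

/-- `B z = w` with the denominators of `B z = γ ∏ (z - λₖ) / (1 - conj λₖ z)` cleared. -/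
noncomputable def blaschkeLevelPoly : ℂ[X] :=
  C γ * ∏ k, (X - C (lam k)) - C w * ∏ k, (1 - C (conj (lam k)) * X)

theorem eval_blaschkeLevelPoly (z : ℂ) :
    (blaschkeLevelPoly γ w lam).eval z =
      γ * ∏ k, (z - lam k) - w * ∏ k, (1 - conj (lam k) * z) := by
  simp [blaschkeLevelPoly, eval_prod]

theorem natDegree_one_sub_C_mul_X_le (c : ℂ) : (1 - C c * X).natDegree ≤ 1 :=
  (natDegree_sub_le _ _).trans (max_le (by simp) ((natDegree_C_mul_le _ _).trans natDegree_X_le))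

theorem natDegree_blaschkeLevelPoly_le :
    (blaschkeLevelPoly γ w lam).natDegree ≤ Fintype.card ι := by
  refine (natDegree_sub_le _ _).trans (max_le ?_ ?_)
  · exact (natDegree_C_mul_le _ _).trans (by simp)
  · refine (natDegree_C_mul_le _ _).trans ((natDegree_prod_le _ _).trans ?_)
    simpa using sum_le_sum fun k (_ : k ∈ univ) => natDegree_one_sub_C_mul_X_le (conj (lam k))

theorem coeff_card_blaschkeLevelPoly :
    (blaschkeLevelPoly γ w lam).coeff (Fintype.card ι) = γ - w * ∏ k, -conj (lam k) := by
  have hnum : (∏ k, (X - C (lam k))).coeff (Fintype.card ι) = 1 := by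
    simpa using (monic_prod_of_monic univ _ fun k _ => monic_X_sub_C (lam k)).coeff_natDegree
  have hden :
      (∏ k, (1 - C (conj (lam k)) * X)).coeff (Fintype.card ι) = ∏ k, -conj (lam k) := by
    simpa [coeff_one] using coeff_prod_of_natDegree_le (s := univ) _ 1
      fun k _ => natDegree_one_sub_C_mul_X_le (conj (lam k))
  simp [blaschkeLevelPoly, hnum, hden]

variable {γ w lam}

theorem isRoot_blaschkeLevelPoly_iff_eq {z : ℂ} : (blaschkeLevelPoly γ w lam).IsRoot z ↔
    γ * ∏ k, (z - lam k) = w * ∏ k, (1 - conj (lam k) * z) := by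
  rw [IsRoot.def, eval_blaschkeLevelPoly, sub_eq_zero]

variable [Nonempty ι]

theorem natDegree_blaschkeLevelPoly (hγ : ‖γ‖ = 1) (hw : ‖w‖ = 1)
    (hlam : ∀ k, ‖lam k‖ < 1) :
    (blaschkeLevelPoly γ w lam).natDegree = Fintype.card ι := by
  refine (natDegree_blaschkeLevelPoly_le γ w lam).antisymm (le_natDegree_of_ne_zero ?_)
  rw [coeff_card_blaschkeLevelPoly, sub_ne_zero]
  refine fun h => lt_irrefl (1 : ℝ) ?_
  calc (1 : ℝ) = ‖w * ∏ k, -conj (lam k)‖ := by rw [← h, hγ]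
    _ = ∏ k, ‖lam k‖ := by simp [hw]
    _ < ∏ _k : ι, (1 : ℝ) :=
      prod_lt_prod_of_nonempty_of_nonneg univ_nonempty (fun k _ => norm_nonneg _)
        fun k _ => hlam k
    _ = 1 := prod_const_one

theorem norm_eq_one_of_isRoot_blaschkeLevelPoly (hγ : ‖γ‖ = 1) (hw : ‖w‖ = 1)
    (hlam : ∀ k, ‖lam k‖ < 1) {z : ℂ} (hz : (blaschkeLevelPoly γ w lam).IsRoot z) :
    ‖z‖ = 1 := by
  have hnorm : ∏ k, ‖z - lam k‖ = ∏ k, ‖1 - conj (lam k) * z‖ := by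
    simpa [hγ, hw] using congrArg norm (isRoot_blaschkeLevelPoly_iff_eq.1 hz)
  rcases lt_trichotomy ‖z‖ 1 with hz1 | hz1 | hz1
  · exact absurd hnorm (prod_lt_prod_of_nonempty_of_nonneg univ_nonempty
      (fun k _ => norm_nonneg _)
      fun k _ => Complex.norm_sub_lt_norm_one_sub_conj_mul (hlam k) hz1).ne
  · exact hz1
  · exact absurd hnorm (prod_lt_prod_of_nonempty_of_nonneg univ_nonempty
      (fun k _ => norm_nonneg _)
      fun k _ => Complex.norm_one_sub_conj_mul_lt_norm_sub (hlam k) hz1).ne'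

theorem isRoot_blaschkeLevelPoly_iff (hγ : ‖γ‖ = 1) (hw : ‖w‖ = 1)
    (hlam : ∀ k, ‖lam k‖ < 1) {z : ℂ} :
    (blaschkeLevelPoly γ w lam).IsRoot z ↔
      ‖z‖ = 1 ∧ γ * ∏ k, (z - lam k) / (1 - conj (lam k) * z) = w := by
  have hquot (hz1 : ‖z‖ = 1) : γ * ∏ k, (z - lam k) / (1 - conj (lam k) * z) = w ↔
      γ * ∏ k, (z - lam k) = w * ∏ k, (1 - conj (lam k) * z) := by
    rw [prod_div_distrib, ← mul_div_assoc, div_eq_iff (prod_ne_zero_iff.2 fun k _ =>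
      Complex.one_sub_conj_mul_ne_zero (hlam k) hz1.le)]
  refine ⟨fun hz => ?_, fun ⟨hz1, hBz⟩ => ?_⟩
  · have hz1 := norm_eq_one_of_isRoot_blaschkeLevelPoly hγ hw hlam hz
    exact ⟨hz1, (hquot hz1).2 (isRoot_blaschkeLevelPoly_iff_eq.1 hz)⟩
  · exact isRoot_blaschkeLevelPoly_iff_eq.2 ((hquot hz1).1 hBz)

theorem eval_derivative_blaschkeLevelPoly_ne_zero (hγ : ‖γ‖ = 1) (hw : ‖w‖ = 1)
    (hlam : ∀ k, ‖lam k‖ < 1) {z : ℂ} (hz : (blaschkeLevelPoly γ w lam).IsRoot z) :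
    (blaschkeLevelPoly γ w lam).derivative.eval z ≠ 0 := by
  have hz1 := norm_eq_one_of_isRoot_blaschkeLevelPoly hγ hw hlam hz
  have hne : ∀ k, z ≠ lam k := fun k h => (hlam k).ne (h ▸ hz1)
  have hden : ∀ k, 1 - conj (lam k) * z ≠ 0 :=
    fun k => Complex.one_sub_conj_mul_ne_zero (hlam k) hz1.le
  have hγ0 : γ ≠ 0 := norm_ne_zero_iff.1 (hγ ▸ one_ne_zero)
  have hw0 : w ≠ 0 := norm_ne_zero_iff.1 (hw ▸ one_ne_zero)
  set A : ℂ → ℂ := fun x => ∏ k, (x - lam k)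
  set D : ℂ → ℂ := fun x => ∏ k, (1 - conj (lam k) * x)
  have hA : A z ≠ 0 := prod_ne_zero_iff.2 fun k _ => sub_ne_zero.2 (hne k)
  have hAD : γ * A z = w * D z := isRoot_blaschkeLevelPoly_iff_eq.1 hz
  have hderiv : (blaschkeLevelPoly γ w lam).derivative.eval z =
      γ * A z * (logDeriv A z - logDeriv D z) := by
    rw [← Polynomial.deriv, funext (eval_blaschkeLevelPoly γ w lam),
      ← logDeriv_const_mul z γ hγ0 (f := A), ← logDeriv_const_mul z w hw0 (f := D)]
    exact deriv_sub_eq_mul_logDeriv_sub (by fun_prop) (by fun_prop) hAD (mul_ne_zero hγ0 hA)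
  have hlog : z * (logDeriv A z - logDeriv D z) =
      ((∑ k, (1 - ‖lam k‖ ^ 2) / ‖z - lam k‖ ^ 2 : ℝ) : ℂ) := by
    rw [logDeriv_prod (fun k _ => sub_ne_zero.2 (hne k)) (fun k _ => by fun_prop),
      logDeriv_prod (fun k _ => hden k) (fun k _ => by fun_prop)]
    simp only [logDeriv_apply]
    rw [← sum_sub_distrib, mul_sum]
    push_cast
    refine sum_congr rfl fun k _ => ?_
    simpa [neg_div] using Complex.mul_inv_sub_add_conj_div_one_sub_conj_mul hz1 (hne k)
  have hpos : 0 < ∑ k, (1 - ‖lam k‖ ^ 2) / ‖z - lam k‖ ^ 2 := by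
    refine sum_pos (fun k _ => div_pos ?_ ?_) univ_nonempty
    · nlinarith [norm_nonneg (lam k), hlam k]
    · exact pow_pos (norm_pos_iff.2 (sub_ne_zero.2 (hne k))) 2
  rw [hderiv]
  refine mul_ne_zero (mul_ne_zero hγ0 hA) fun h => hpos.ne' ?_
  have hsum : ((∑ k, (1 - ‖lam k‖ ^ 2) / ‖z - lam k‖ ^ 2 : ℝ) : ℂ) = 0 := by
    rw [← hlog, h, mul_zero]
  exact_mod_cast hsum

end BlaschkeLevelPoly

/-- For a finite Blaschke product `B` of degree `n ≥ 1` and any `w` on the unit circle,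
the equation `B z = w` has exactly `n` distinct solutions `z` on the unit circle. -/
theorem blaschkeProduct_preimage_card (n : ℕ) (hn : 1 ≤ n) (γ : ℂ) (hγ : ‖γ‖ = 1)
    (lam : Fin n → ℂ) (hlam : ∀ k, ‖lam k‖ < 1)
    (B : ℂ → ℂ)
    (hB : ∀ z, B z = γ * ∏ k : Fin n, (z - lam k) / (1 - (starRingEnd ℂ) (lam k) * z)) :
    ∀ w : ℂ, ‖w‖ = 1 →
      ∃ S : Finset ℂ, S.card = n ∧ ∀ z : ℂ, z ∈ S ↔ (‖z‖ = 1 ∧ B z = w) := by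
  intro w hw
  have : Nonempty (Fin n) := ⟨⟨0, hn⟩⟩
  set P := blaschkeLevelPoly γ w lam
  have hdeg : P.natDegree = n := by
    rw [natDegree_blaschkeLevelPoly hγ hw hlam, Fintype.card_fin]
  have hP : P ≠ 0 := ne_zero_of_natDegree_gt (hdeg ▸ hn)
  refine ⟨P.roots.toFinset, ?_, fun z => ?_⟩
  · rw [Multiset.toFinset_card_of_nodup (nodup_roots_of_eval_derivative_ne_zero
      fun z => eval_derivative_blaschkeLevelPoly_ne_zero hγ hw hlam),
      ← (IsAlgClosed.splits P).natDegree_eq_card_roots, hdeg]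
  · rw [Multiset.mem_toFinset, mem_roots hP, isRoot_blaschkeLevelPoly_iff hγ hw hlam, hB]
end

section
/- Let a_1,…,a_n, b_1,…,b_n, c_0 be points on the unit circle in the strict cyclic order a_1 ≺ b_1 ≺ a_2 ≺ … ≺ a_n ≺ b_n, with b_{k−1} ≺ c_0 ≺ a_k for some k, and let a, b, c be unimodular with cyclic order a ≺ b ≺ c ≺ a. Then there exists at most one Blaschke product B of degree n with B(a_k) = a, B(b_k) = b for all k and B(c_0) = c. -/
open Finset Real

/-- A Blaschke product of degree `n`, as a function `ℂ → ℂ`. -/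
def IsBlaschkeProduct (n : ℕ) (B : ℂ → ℂ) : Prop :=
  ∃ (γ : ℂ) (lam : Fin n → ℂ), ‖γ‖ = 1 ∧ (∀ k, ‖lam k‖ < 1) ∧
    ∀ z : ℂ, B z = γ * ∏ k : Fin n, (z - lam k) / (1 - (starRingEnd ℂ) (lam k) * z)

/-!
Write `Bᵢ = Pᵢ / Qᵢ` with polynomials `Pᵢ, Qᵢ` of degree `≤ n`. On the closed disc the `Qᵢ` do not
vanish, so `B₁ = B₂` at the nodes `a_k, b_k, c₀` says that the polynomials `P₁ Q₂` and `P₂ Q₁`, of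
degree `≤ 2n`, agree at `2n + 1` points. These points are distinct: the angles
`α₀ < β₀ < ⋯ < β_{n-1}` increase strictly, `γ₀` falls into a gap between them, and all of them lie
in `[α₀, α₀ + 2π)`. Hence `P₁ Q₂ = P₂ Q₁`. As the zeros of `Pᵢ` lie in the open disc and
those of `Qᵢ` outside the closed disc, `Q₁` and `Q₂` have the same zeros, so `B₁ = B₂` also at the
poles, where Lean's division makes both `0`.
-/

lemma div_eq_div_of_mul_eq_mul {K : Type*} [Field K] {a b c d : K} (h : a * d = c * b)
    (hbd : b = 0 ↔ d = 0) : a / b = c / d := by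
  by_cases hb : b = 0
  · simp [hb, hbd.1 hb]
  · rw [div_eq_div_iff hb (mt hbd.2 hb), h]

section BlaschkeFactorization

open Polynomial

variable {n : ℕ}

noncomputable def blaschkeNumerator (γ : ℂ) (lam : Fin n → ℂ) : ℂ[X] :=
  C γ * ∏ k, (X - C (lam k))

noncomputable def blaschkeDenominator (lam : Fin n → ℂ) : ℂ[X] :=
  ∏ k, (1 - C (starRingEnd ℂ (lam k)) * X)

lemma natDegree_blaschkeNumerator_le (γ : ℂ) (lam : Fin n → ℂ) :
    (blaschkeNumerator γ lam).natDegree ≤ n := by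
  refine natDegree_C_mul_le _ _ |>.trans <| natDegree_prod_le _ _ |>.trans ?_
  simp

lemma natDegree_blaschkeDenominator_le (lam : Fin n → ℂ) :
    (blaschkeDenominator lam).natDegree ≤ n := by
  refine (natDegree_prod_le _ _).trans <| (sum_le_card_nsmul _ _ 1 fun k _ => ?_).trans (by simp)
  exact natDegree_sub_le_of_le (natDegree_one.trans_le zero_le_one)
    ((natDegree_C_mul_le _ _).trans natDegree_X_le)

lemma eval_blaschkeNumerator_ne_zero {γ z : ℂ} {lam : Fin n → ℂ} (hγ : γ ≠ 0)
    (hlam : ∀ k, ‖lam k‖ < 1) (hz : 1 ≤ ‖z‖) : (blaschkeNumerator γ lam).eval z ≠ 0 := by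
  simp only [blaschkeNumerator, eval_mul, eval_C, eval_prod, eval_sub, eval_X]
  refine mul_ne_zero hγ <| prod_ne_zero_iff.2 fun k _ => sub_ne_zero.2 ?_
  rintro rfl
  exact (hlam k).not_ge hz

lemma one_lt_norm_of_eval_blaschkeDenominator_eq_zero {z : ℂ} {lam : Fin n → ℂ}
    (hlam : ∀ k, ‖lam k‖ < 1) (hz : (blaschkeDenominator lam).eval z = 0) : 1 < ‖z‖ := by
  simp only [blaschkeDenominator, eval_prod, eval_sub, eval_one, eval_mul, eval_C, eval_X,
    prod_eq_zero_iff, mem_univ, true_and] at hz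
  obtain ⟨k, hk⟩ := hz
  have hnorm : ‖lam k‖ * ‖z‖ = 1 := by
    simpa [Complex.norm_conj] using congrArg norm (sub_eq_zero.1 hk).symm
  nlinarith [hlam k, norm_nonneg z, norm_nonneg (lam k)]

lemma eval_blaschkeDenominator_ne_zero {z : ℂ} {lam : Fin n → ℂ}
    (hlam : ∀ k, ‖lam k‖ < 1) (hz : ‖z‖ ≤ 1) : (blaschkeDenominator lam).eval z ≠ 0 :=
  fun h => (one_lt_norm_of_eval_blaschkeDenominator_eq_zero hlam h).not_ge hz

lemma IsBlaschkeProduct.exists_eq_div {B : ℂ → ℂ} (hB : IsBlaschkeProduct n B) :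
    ∃ (γ : ℂ) (lam : Fin n → ℂ), γ ≠ 0 ∧ (∀ k, ‖lam k‖ < 1) ∧
      B = fun z => (blaschkeNumerator γ lam).eval z / (blaschkeDenominator lam).eval z := by
  obtain ⟨γ, lam, hγ, hlam, hB⟩ := hB
  refine ⟨γ, lam, norm_ne_zero_iff.1 (hγ ▸ one_ne_zero), hlam, funext fun z => ?_⟩
  simp [hB, blaschkeNumerator, blaschkeDenominator, eval_prod, prod_div_distrib, mul_div_assoc]

theorem IsBlaschkeProduct.eq_of_eqOn {B₁ B₂ : ℂ → ℂ} (hB₁ : IsBlaschkeProduct n B₁)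
    (hB₂ : IsBlaschkeProduct n B₂) (s : Finset ℂ) (hs : ∀ z ∈ s, ‖z‖ ≤ 1) (hcard : 2 * n < #s)
    (h : ∀ z ∈ s, B₁ z = B₂ z) : B₁ = B₂ := by
  obtain ⟨γ₁, l₁, hγ₁, hl₁, rfl⟩ := hB₁.exists_eq_div
  obtain ⟨γ₂, l₂, hγ₂, hl₂, rfl⟩ := hB₂.exists_eq_div
  set P₁ := blaschkeNumerator γ₁ l₁
  set P₂ := blaschkeNumerator γ₂ l₂
  set Q₁ := blaschkeDenominator l₁
  set Q₂ := blaschkeDenominator l₂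
  have hcross : P₁ * Q₂ = P₂ * Q₁ := by
    refine eq_of_natDegree_lt_card_of_eval_eq' _ _ s (fun z hz => ?_) ?_
    · simp only [eval_mul]
      exact (div_eq_div_iff (eval_blaschkeDenominator_ne_zero hl₁ (hs z hz))
        (eval_blaschkeDenominator_ne_zero hl₂ (hs z hz))).1 (h z hz)
    · have hdeg : ∀ (P Q : ℂ[X]), P.natDegree ≤ n → Q.natDegree ≤ n → (P * Q).natDegree ≤ 2 * n :=
        fun P Q hP hQ => natDegree_mul_le.trans (two_mul n ▸ add_le_add hP hQ)
      refine max_lt (lt_of_le_of_lt ?_ hcard) (lt_of_le_of_lt ?_ hcard) <;>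
        exact hdeg _ _ (natDegree_blaschkeNumerator_le _ _) (natDegree_blaschkeDenominator_le _)
  funext z
  have hz : P₁.eval z * Q₂.eval z = P₂.eval z * Q₁.eval z := by
    simpa only [eval_mul] using congrArg (eval z) hcross
  refine div_eq_div_of_mul_eq_mul hz ⟨fun hQ₁ => ?_, fun hQ₂ => ?_⟩
  · have hP₁ := eval_blaschkeNumerator_ne_zero hγ₁ hl₁
      (one_lt_norm_of_eval_blaschkeDenominator_eq_zero hl₁ hQ₁).le
    exact (mul_eq_zero.1 (by rw [hz, hQ₁, mul_zero])).resolve_left hP₁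
  · have hP₂ := eval_blaschkeNumerator_ne_zero hγ₂ hl₂
      (one_lt_norm_of_eval_blaschkeDenominator_eq_zero hl₂ hQ₂).le
    exact (mul_eq_zero.1 (by rw [← hz, hQ₂, mul_zero])).resolve_left hP₂

end BlaschkeFactorization

section Interleave

variable {X : Type*} (α β : ℕ → X)

def interleave (i : ℕ) : X :=
  if Even i then α (i / 2) else β (i / 2)

@[simp]
lemma interleave_two_mul (k : ℕ) : interleave α β (2 * k) = α k := by
  simp [interleave]

@[simp]
lemma interleave_two_mul_add_one (k : ℕ) : interleave α β (2 * k + 1) = β k := by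
  simp [interleave, Nat.mul_add_div two_pos]

@[simp]
lemma interleave_zero : interleave α β 0 = α 0 :=
  interleave_two_mul α β 0

variable {α β}

lemma forall_interleave {P : X → Prop} {n : ℕ} (hα : ∀ k < n, P (α k)) (hβ : ∀ k < n, P (β k))
    (i : ℕ) (hi : i < 2 * n) : P (interleave α β i) := by
  obtain ⟨k, rfl | rfl⟩ := Nat.even_or_odd' i
  · simpa using hα k (by omega)
  · simpa using hβ k (by omega)

lemma strictMonoOn_interleave [Preorder X] {n : ℕ} (h₁ : ∀ k < n, α k < β k)
    (h₂ : ∀ k, k + 1 < n → β k < α (k + 1)) : StrictMonoOn (interleave α β) (Set.Iio (2 * n)) := by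
  refine strictMonoOn_of_lt_succ Set.ordConnected_Iio fun i _ _ hi => ?_
  rw [Order.succ_eq_add_one, Set.mem_Iio] at hi
  rw [Order.succ_eq_add_one]
  obtain ⟨k, rfl | rfl⟩ := Nat.even_or_odd' i
  · simpa using h₁ k (by omega)
  · simpa [show 2 * k + 1 + 1 = 2 * (k + 1) by ring] using h₂ k (by omega)

end Interleave

lemma StrictMonoOn.ne_of_lt_of_lt_succ {X : Type*} [Preorder X] {f : ℕ → X} {m j : ℕ} {x : X}
    (hf : StrictMonoOn f (Set.Iio m)) (hj : j < m) (hlo : f j < x) (hhi : j + 1 < m → x < f (j + 1))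
    {i : ℕ} (hi : i < m) : f i ≠ x := by
  rcases le_or_gt i j with hij | hij
  · exact ((hf.monotoneOn hi hj hij).trans_lt hlo).ne
  · exact ((hhi (by omega)).trans_le (hf.monotoneOn (show j + 1 < m by omega) hi hij)).ne'

lemma card_image_exp_mul_I_insert_image {f : ℕ → ℝ} {m j : ℕ} {x : ℝ}
    (hf : StrictMonoOn f (Set.Iio m)) (hwrap : f (m - 1) < f 0 + 2 * π) (hj : j < m)
    (hlo : f j < x) (hhi : j + 1 < m → x < f (j + 1)) (hx : x < f 0 + 2 * π) :
    #((insert x ((range m).image f)).image fun t : ℝ => Complex.exp (t * Complex.I)) = m + 1 := by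
  have hbound : ∀ i < m, f 0 ≤ f i ∧ f i ≤ f (m - 1) := fun i hi =>
    ⟨hf.monotoneOn (show 0 < m by omega) hi (Nat.zero_le i),
      hf.monotoneOn hi (show m - 1 < m by omega) (by omega)⟩
  have hIco : ∀ t ∈ insert x ((range m).image f), t ∈ Set.Ico (f 0) (f 0 + 2 * π) := by
    simp only [mem_insert, mem_image, mem_range]
    rintro t (rfl | ⟨i, hi, rfl⟩)
    · exact ⟨(hbound j hj).1.trans hlo.le, hx⟩
    · exact ⟨(hbound i hi).1, (hbound i hi).2.trans_lt hwrap⟩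
  have hexp : Set.InjOn (fun t : ℝ => Complex.exp (t * Complex.I)) (Set.Ico (f 0) (f 0 + 2 * π)) :=
    Subtype.val_injective.comp_injOn (Circle.exp_injOn_Ico (add_sub_cancel_left _ _).le)
  rw [card_image_of_injOn (hexp.mono hIco), card_insert_of_notMem, card_image_of_injOn, card_range]
  · exact hf.injOn.mono fun i hi => by simpa using hi
  · simp only [mem_image, mem_range, not_exists, not_and]
    exact fun i hi => hf.ne_of_lt_of_lt_succ hj hlo hhi hi

theorem blaschke_boundary_interpolation_unique_general (n : ℕ) (hn : 1 ≤ n)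
    (α β : ℕ → ℝ)
    (hinter1 : ∀ k, k < n → α k < β k)
    (hinter2 : ∀ k, k + 1 < n → β k < α (k + 1))
    (hwrap : β (n - 1) < α 0 + 2 * π)
    (γ₀ : ℝ)
    (hc₀ : (∃ k, 1 ≤ k ∧ k < n ∧ β (k - 1) < γ₀ ∧ γ₀ < α k) ∨
      (β (n - 1) < γ₀ ∧ γ₀ < α 0 + 2 * π))
    (a b c : ℂ)
    (B₁ B₂ : ℂ → ℂ) (hB₁ : IsBlaschkeProduct n B₁) (hB₂ : IsBlaschkeProduct n B₂)
    (hB₁a : ∀ k, k < n → B₁ (Complex.exp (α k * Complex.I)) = a)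
    (hB₁b : ∀ k, k < n → B₁ (Complex.exp (β k * Complex.I)) = b)
    (hB₁c : B₁ (Complex.exp (γ₀ * Complex.I)) = c)
    (hB₂a : ∀ k, k < n → B₂ (Complex.exp (α k * Complex.I)) = a)
    (hB₂b : ∀ k, k < n → B₂ (Complex.exp (β k * Complex.I)) = b)
    (hB₂c : B₂ (Complex.exp (γ₀ * Complex.I)) = c) :
    ∀ z : ℂ, B₁ z = B₂ z := by
  set θ := interleave α β with hθ
  have hmono : StrictMonoOn θ (Set.Iio (2 * n)) := strictMonoOn_interleave hinter1 hinter2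
  have hθwrap : θ (2 * n - 1) < θ 0 + 2 * π := by
    simpa [hθ, show 2 * n - 1 = 2 * (n - 1) + 1 by omega] using hwrap
  obtain ⟨j, hj, hlo, hhi, hx⟩ : ∃ j < 2 * n, θ j < γ₀ ∧ (j + 1 < 2 * n → γ₀ < θ (j + 1)) ∧
      γ₀ < θ 0 + 2 * π := by
    rcases hc₀ with ⟨k, hk, hkn, hlo, hhi⟩ | ⟨hlo, hx⟩
    · have hαk : γ₀ < θ (2 * k) := by simpa [hθ] using hhi
      refine ⟨2 * (k - 1) + 1, by omega, by simpa [hθ] using hlo,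
        fun _ => by rwa [show 2 * (k - 1) + 1 + 1 = 2 * k by omega], ?_⟩
      exact hαk.trans_le (hmono.monotoneOn (show 2 * k < 2 * n by omega)
        (show 2 * n - 1 < 2 * n by omega) (by omega)) |>.trans hθwrap
    · exact ⟨2 * (n - 1) + 1, by omega, by simpa [hθ] using hlo, fun h => absurd h (by omega),
        by simpa [hθ] using hx⟩
  refine congrFun (hB₁.eq_of_eqOn hB₂ _ ?_
    (by rw [card_image_exp_mul_I_insert_image hmono hθwrap hj hlo hhi hx]; omega) ?_)
  all_goals simp only [mem_image, mem_insert, mem_range]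
  · rintro _ ⟨t, -, rfl⟩
    exact (Complex.norm_exp_ofReal_mul_I t).le
  · rintro _ ⟨t, rfl | ⟨i, hi, rfl⟩, rfl⟩
    · exact hB₁c.trans hB₂c.symm
    · exact forall_interleave
        (P := fun t : ℝ => B₁ (Complex.exp (t * Complex.I)) = B₂ (Complex.exp (t * Complex.I)))
        (fun k hk => (hB₁a k hk).trans (hB₂a k hk).symm)
        (fun k hk => (hB₁b k hk).trans (hB₂b k hk).symm) i hi

/-- Uniqueness in the boundary interpolation problem: given points
`a_1 ≺ b_1 ≺ a_2 ≺ … ≺ a_n ≺ b_n` on the unit circle in strict cyclic order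
(encoded by strictly increasing angles `α_k, β_k`), a point `c₀` lying on one of the
arcs `(b_{k-1}, a_k)`, and target values `a ≺ b ≺ c ≺ a` on the circle, there is at
most one Blaschke product `B` of degree `n` with `B(a_k) = a`, `B(b_k) = b` for all `k`
and `B(c₀) = c`. -/
theorem blaschke_boundary_interpolation_unique (n : ℕ) (hn : 1 ≤ n)
    (α β : ℕ → ℝ)
    (hinter1 : ∀ k, k < n → α k < β k)
    (hinter2 : ∀ k, k + 1 < n → β k < α (k + 1))
    (hwrap : β (n - 1) < α 0 + 2 * π)
    (γ₀ : ℝ)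
    (hc₀ : (∃ k, 1 ≤ k ∧ k < n ∧ β (k - 1) < γ₀ ∧ γ₀ < α k) ∨
      (β (n - 1) < γ₀ ∧ γ₀ < α 0 + 2 * π))
    (a b c : ℂ) (u v w : ℝ)
    (ha : a = Complex.exp (u * Complex.I)) (hb : b = Complex.exp (v * Complex.I))
    (hc : c = Complex.exp (w * Complex.I))
    (hcyc : u < v ∧ v < w ∧ w < u + 2 * π)
    (B₁ B₂ : ℂ → ℂ) (hB₁ : IsBlaschkeProduct n B₁) (hB₂ : IsBlaschkeProduct n B₂)
    (hB₁a : ∀ k, k < n → B₁ (Complex.exp (α k * Complex.I)) = a)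
    (hB₁b : ∀ k, k < n → B₁ (Complex.exp (β k * Complex.I)) = b)
    (hB₁c : B₁ (Complex.exp (γ₀ * Complex.I)) = c)
    (hB₂a : ∀ k, k < n → B₂ (Complex.exp (α k * Complex.I)) = a)
    (hB₂b : ∀ k, k < n → B₂ (Complex.exp (β k * Complex.I)) = b)
    (hB₂c : B₂ (Complex.exp (γ₀ * Complex.I)) = c) :
    ∀ z : ℂ, B₁ z = B₂ z :=
  blaschke_boundary_interpolation_unique_general n hn α β hinter1 hinter2 hwrap γ₀ hc₀ a b c B₁ B₂
    hB₁ hB₂ hB₁a hB₁b hB₁c hB₂a hB₂b hB₂c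
end
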